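/- arXiv:1807.06790 — 2 statements merged into one kernel-verified Lean document; each statement's English description precedes it below -/
import Mathlib

section
/- Let Γ = ⟨S | R⟩ be a finitely presented group that is both G-approximated and G-stable for a family G = (U(n), d_n) of unitary groups with bi-invariant metrics. Then Γ is residually finite. -/
open Filter

set_option maxHeartbeats 1000000
set_option synthInstance.maxHeartbeats 400000

instance : IsJacobsonRing ℤ := by
  rw [isJacobsonRing_iff_prime_eq]
  intro P hP
  rcases eq_or_ne P ⊥ with rfl | hbot
  · refine le_antisymm ?_ Ideal.le_jacobson
    intro x hx
    rw [Ideal.mem_jacobson_bot] at hx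
    have h1 := hx 1
    have h2 := hx 2
    rw [Int.isUnit_iff] at h1 h2
    simp only [Ideal.mem_bot]
    omega
  · haveI := hP
    haveI := IsPrime.to_maximal_ideal hbot
    exact Ideal.jacobson_eq_self_of_isMaximal

lemma finite_of_field_of_finite_int (F : Type*) [Field F] [Module.Finite ℤ F] : Finite F := by
  obtain ⟨p, hp⟩ := CharP.exists F
  rcases CharP.char_is_prime_or_zero F p with hprime | hzero
  · haveI : Fact p.Prime := ⟨hprime⟩
    letI : Algebra (ZMod p) F := ZMod.algebra F p
    haveI : Module.Finite (ZMod p) F := Module.Finite.of_restrictScalars_finite ℤ (ZMod p) F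
    exact Module.finite_of_finite (ZMod p)
  · subst hzero
    haveI : CharZero F := CharP.charP_to_charZero F
    haveI : IsScalarTower ℤ ℚ F := IsScalarTower.of_algebraMap_eq (fun x => by
      rw [algebraMap_int_eq, eq_intCast, eq_intCast, map_intCast])
    haveI : Algebra.IsIntegral ℤ F := Algebra.IsIntegral.of_finite ℤ F
    have h2 : IsIntegral ℤ ((algebraMap ℚ F) (1/2 : ℚ)) := Algebra.IsIntegral.isIntegral _
    have h3 : IsIntegral ℤ (1/2 : ℚ) := IsIntegral.tower_bot (algebraMap ℚ F).injective h2
    obtain ⟨y, hy⟩ := IsIntegrallyClosed.isIntegral_iff.mp h3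
    rw [algebraMap_int_eq, eq_intCast] at hy
    have h4 : ((2*y : ℤ) : ℚ) = 1 := by push_cast [hy]; ring
    have h5 : (2*y : ℤ) = 1 := by exact_mod_cast h4
    omega

lemma quotient_finite (A : Type*) [CommRing A] [Algebra.FiniteType ℤ A]
    (m : Ideal A) [m.IsMaximal] : Finite (A ⧸ m) := by
  letI : Field (A ⧸ m) := Ideal.Quotient.field m
  haveI : Algebra.FiniteType ℤ (A ⧸ m) :=
    Algebra.FiniteType.of_surjective (Ideal.Quotient.mkₐ ℤ m)
      (Ideal.Quotient.mkₐ_surjective ℤ m)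
  haveI : Module.Finite ℤ (A ⧸ m) := finite_of_finite_type_of_isJacobsonRing ℤ _
  exact finite_of_field_of_finite_int _

lemma toGroup_mk' {α : Type*} {G : Type*} [Group G] {f : α → G} {rels : Set (FreeGroup α)}
    (h : ∀ r ∈ rels, FreeGroup.lift f r = 1) (w : FreeGroup α) :
    PresentedGroup.toGroup h (PresentedGroup.mk rels w) = FreeGroup.lift f w := by
  have hc : (PresentedGroup.toGroup h).comp (PresentedGroup.mk rels) = FreeGroup.lift f :=
    FreeGroup.ext_hom _ _ fun a => by
      rw [MonoidHom.comp_apply, FreeGroup.lift_apply_of]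
      exact PresentedGroup.toGroup.of h
  exact DFunLike.congr_fun hc w

lemma malcev_step {α : Type*} [Fintype α] [DecidableEq α] (R : Finset (FreeGroup α)) (n : ℕ)
    (ψ : α → Matrix.unitaryGroup (Fin n) ℂ)
    (hrel : ∀ r ∈ R, FreeGroup.lift ψ r = 1)
    (w : FreeGroup α) (hw : FreeGroup.lift ψ w ≠ 1) :
    ∃ (Q : Type) (_ : Group Q) (_ : Finite Q)
      (f : PresentedGroup (↑R : Set (FreeGroup α)) →* Q),
        f (PresentedGroup.mk (↑R : Set (FreeGroup α)) w) ≠ 1 := by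
  classical
  set E : Finset ℂ := Finset.image (fun x : α × Fin n × Fin n × Bool =>
    if x.2.2.2 then ((ψ x.1 : Matrix (Fin n) (Fin n) ℂ) x.2.1 x.2.2.1)
    else star ((ψ x.1 : Matrix (Fin n) (Fin n) ℂ) x.2.1 x.2.2.1)) Finset.univ with hE
  set A : Subalgebra ℤ ℂ := Algebra.adjoin ℤ (E : Set ℂ) with hA
  have hmem : ∀ s i j, ((ψ s : Matrix (Fin n) (Fin n) ℂ) i j) ∈ A := fun s i j =>
    Algebra.subset_adjoin (by
      simp only [hE, Finset.coe_image, Set.mem_image]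
      exact ⟨⟨s, i, j, true⟩, by simp, by simp⟩)
  have hmem' : ∀ s i j, star ((ψ s : Matrix (Fin n) (Fin n) ℂ) i j) ∈ A := fun s i j =>
    Algebra.subset_adjoin (by
      simp only [hE, Finset.coe_image, Set.mem_image]
      exact ⟨⟨s, i, j, false⟩, by simp, by simp⟩)
  set M : α → Matrix (Fin n) (Fin n) A := fun s i j => ⟨_, hmem s i j⟩ with hM
  set N : α → Matrix (Fin n) (Fin n) A := fun s i j => ⟨_, hmem' s j i⟩ with hN
  set ρ : Matrix (Fin n) (Fin n) A →+* Matrix (Fin n) (Fin n) ℂ :=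
    (A.val.toRingHom).mapMatrix with hρ
  have hρinj : Function.Injective ρ := Matrix.map_injective Subtype.val_injective
  have hρM : ∀ s, ρ (M s) = (ψ s : Matrix (Fin n) (Fin n) ℂ) := fun s => by
    ext i j
    simp [hρ, RingHom.mapMatrix_apply, Matrix.map_apply, hM]
    rfl
  have hρN : ∀ s, ρ (N s) = star (ψ s : Matrix (Fin n) (Fin n) ℂ) := fun s => by
    ext i j
    simp [hρ, RingHom.mapMatrix_apply, Matrix.map_apply, hN, Matrix.star_apply]
    rfl
  have hMN : ∀ s, M s * N s = 1 := fun s => hρinj (by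
    rw [map_mul, map_one, hρM, hρN]
    exact ((Unitary.mem_iff).mp (ψ s).2).2)
  have hNM : ∀ s, N s * M s = 1 := fun s => hρinj (by
    rw [map_mul, map_one, hρM, hρN]
    exact ((Unitary.mem_iff).mp (ψ s).2).1)
  set Ψ : α → (Matrix (Fin n) (Fin n) A)ˣ := fun s => ⟨M s, N s, hMN s, hNM s⟩ with hΨ
  set jj : Matrix.unitaryGroup (Fin n) ℂ →* (Matrix (Fin n) (Fin n) ℂ)ˣ :=
    Unitary.toUnits with hjj
  have hjinj : Function.Injective jj := fun u v huv =>
    Subtype.ext (congrArg Units.val huv)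
  have hcomm : ∀ v : FreeGroup α,
      Units.map ρ.toMonoidHom (FreeGroup.lift Ψ v) = jj (FreeGroup.lift ψ v) := by
    intro v
    have h1 : (Units.map ρ.toMonoidHom).comp (FreeGroup.lift Ψ) =
        jj.comp (FreeGroup.lift ψ) :=
      FreeGroup.ext_hom _ _ fun a => by
        simp only [MonoidHom.comp_apply, FreeGroup.lift_apply_of]
        exact Units.ext (hρM a)
    exact DFunLike.congr_fun h1 v
  have hrel' : ∀ r ∈ (↑R : Set (FreeGroup α)), FreeGroup.lift Ψ r = 1 := fun r hr => by
    apply Units.map_injective hρinj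
    rw [hcomm r, hrel r (Finset.mem_coe.mp hr), map_one, map_one]
  set Φ := PresentedGroup.toGroup hrel' with hΦ
  have hΦw : Units.map ρ.toMonoidHom (Φ (PresentedGroup.mk (↑R : Set (FreeGroup α)) w))
      = jj (FreeGroup.lift ψ w) := by
    rw [hΦ, toGroup_mk', hcomm]
  have hXne : Φ (PresentedGroup.mk (↑R : Set (FreeGroup α)) w) ≠ 1 := by
    intro h
    apply hw
    apply hjinj
    rw [← hΦw, h, map_one, map_one]
  set X : Matrix (Fin n) (Fin n) A := ((Φ (PresentedGroup.mk (↑R : Set (FreeGroup α)) w) : (Matrix (Fin n) (Fin n) A)ˣ) : Matrix (Fin n) (Fin n) A) with hX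
  have hX1 : X ≠ 1 := fun h => hXne (Units.ext h)
  have hex : ∃ i j, X i j ≠ (1 : Matrix (Fin n) (Fin n) A) i j := by
    by_contra h
    push_neg at h
    exact hX1 (by ext i j; exact congrArg Subtype.val (h i j))
  obtain ⟨i0, j0, hij⟩ := hex
  haveI : Algebra.FiniteType ℤ A := (Subalgebra.fg_iff_finiteType A).mp (Subalgebra.fg_adjoin_finset E)
  haveI : IsJacobsonRing A := isJacobsonRing_of_finiteType (A := ℤ)
  have hjac : ((⊥ : Ideal A)).jacobson = ⊥ :=
    isJacobsonRing_iff_prime_eq.mp inferInstance ⊥ Ideal.bot_prime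
  have ha : (X i0 j0 - (1 : Matrix (Fin n) (Fin n) A) i0 j0) ∉ ((⊥ : Ideal A)).jacobson := by
    rw [hjac]
    simpa [Ideal.mem_bot, sub_eq_zero] using hij
  unfold Ideal.jacobson at ha
  rw [Ideal.mem_sInf] at ha
  push_neg at ha
  obtain ⟨m, ⟨-, hmax⟩, ham⟩ := ha
  haveI := hmax
  haveI : Finite (A ⧸ m) := quotient_finite A m
  refine ⟨(Matrix (Fin n) (Fin n) (A ⧸ m))ˣ, inferInstance, inferInstance,
    (Units.map ((Ideal.Quotient.mk m).mapMatrix).toMonoidHom).comp Φ, ?_⟩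
  intro hcontra
  apply ham
  have h1 : (Ideal.Quotient.mk m).mapMatrix X = 1 := by
    have := congrArg Units.val hcontra
    exact this
  rw [← map_one ((Ideal.Quotient.mk m).mapMatrix)] at h1
  have h2 := congrFun (congrFun h1 i0) j0
  simp only [RingHom.mapMatrix_apply, Matrix.map_apply] at h2
  rw [← Ideal.Quotient.eq] at *
  exact h2

lemma lift_dist_bound {α : Type*} [Fintype α] [DecidableEq α]
    (d : ∀ n, Matrix.unitaryGroup (Fin n) ℂ → Matrix.unitaryGroup (Fin n) ℂ → ℝ)
    (hmetric : ∀ n (x y z : Matrix.unitaryGroup (Fin n) ℂ),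
      (d n x y = 0 ↔ x = y) ∧ d n x y = d n y x ∧ d n x z ≤ d n x y + d n y z)
    (hbi : ∀ n (a x y : Matrix.unitaryGroup (Fin n) ℂ),
      d n (a * x) (a * y) = d n x y ∧ d n (x * a) (y * a) = d n x y)
    (w : FreeGroup α) :
    ∃ C : ℕ, ∀ n (χ ψ : α → Matrix.unitaryGroup (Fin n) ℂ) (M : ℝ), 0 ≤ M →
      (∀ s, d n (χ s) (ψ s) ≤ M) →
      d n (FreeGroup.lift χ w) (FreeGroup.lift ψ w) ≤ C * M := by
  have hsymm : ∀ n (x y : Matrix.unitaryGroup (Fin n) ℂ), d n x y = d n y x :=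
    fun n x y => (hmetric n x y x).2.1
  have hzero : ∀ n (x : Matrix.unitaryGroup (Fin n) ℂ), d n x x = 0 :=
    fun n x => (hmetric n x x x).1.mpr rfl
  have htri : ∀ n (x y z : Matrix.unitaryGroup (Fin n) ℂ), d n x z ≤ d n x y + d n y z :=
    fun n x y z => (hmetric n x y z).2.2
  have hinv : ∀ n (x y : Matrix.unitaryGroup (Fin n) ℂ), d n x⁻¹ y⁻¹ = d n x y := by
    intro n x y
    have h1 := (hbi n x x⁻¹ y⁻¹).1
    rw [mul_inv_cancel] at h1
    have h2 := (hbi n y 1 (x * y⁻¹)).2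
    rw [one_mul, inv_mul_cancel_right] at h2
    rw [← h1, ← h2]
    exact hsymm n y x
  induction w using FreeGroup.induction_on with
  | C1 =>
    exact ⟨0, fun n χ ψ M hM h => by
      simp only [map_one, Nat.cast_zero, zero_mul]
      exact le_of_eq (hzero n 1)⟩
  | of x =>
    refine ⟨1, fun n χ ψ M hM h => ?_⟩
    have hp : (pure x : FreeGroup α) = FreeGroup.of x := rfl
    simp only [FreeGroup.lift_apply_of, Nat.cast_one, one_mul]
    exact h x
  | inv_of x _ =>
    refine ⟨1, fun n χ ψ M hM h => ?_⟩
    have hp : (pure x : FreeGroup α) = FreeGroup.of x := rfl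
    simp only [map_inv, FreeGroup.lift_apply_of, Nat.cast_one, one_mul]
    rw [hinv]
    exact h x
  | mul x y ihx ihy =>
    obtain ⟨Cx, hx⟩ := ihx
    obtain ⟨Cy, hy⟩ := ihy
    refine ⟨Cx + Cy, fun n χ ψ M hM h => ?_⟩
    simp only [map_mul]
    have t2 := htri n (FreeGroup.lift χ x * FreeGroup.lift χ y)
      (FreeGroup.lift χ x * FreeGroup.lift ψ y) (FreeGroup.lift ψ x * FreeGroup.lift ψ y)
    have e1 := (hbi n (FreeGroup.lift χ x) (FreeGroup.lift χ y) (FreeGroup.lift ψ y)).1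
    have e2 := (hbi n (FreeGroup.lift ψ y) (FreeGroup.lift χ x) (FreeGroup.lift ψ x)).2
    have bx := hx n χ ψ M hM h
    have by' := hy n χ ψ M hM h
    push_cast
    rw [add_mul]
    linarith


/-- `Γ` is `𝒢`-approximated for `𝒢 = (U(n), d_n)`. -/
def IsApproximated (d : ∀ n, Matrix.unitaryGroup (Fin n) ℂ → Matrix.unitaryGroup (Fin n) ℂ → ℝ)
    (Γ : Type*) [Group Γ] : Prop :=
  ∃ nk : ℕ → ℕ, StrictMono nk ∧
    ∃ φ : ∀ k, Γ → Matrix.unitaryGroup (Fin (nk k)) ℂ,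
      (∀ g h : Γ,
        Tendsto (fun k => d (nk k) (φ k (g * h)) (φ k g * φ k h)) atTop (nhds 0)) ∧
      (∀ g : Γ, g ≠ 1 → ∃ ε > (0 : ℝ), ∃ᶠ k in atTop, ε ≤ d (nk k) (φ k g) 1)

/-- The finitely presented group `⟨S | R⟩` is `𝒢`-stable: for every `ε > 0` there is
`δ > 0` such that any `φ : S → U(n)` whose extension to the free group is a
`δ`-almost-solution of the relations is `ε`-close to a genuine solution. -/
def IsStable {α : Type*} [Fintype α] [DecidableEq α] (R : Finset (FreeGroup α))
    (d : ∀ n, Matrix.unitaryGroup (Fin n) ℂ → Matrix.unitaryGroup (Fin n) ℂ → ℝ) : Prop :=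
  ∀ ε > (0 : ℝ), ∃ δ > (0 : ℝ), ∀ n (φ : α → Matrix.unitaryGroup (Fin n) ℂ),
    (∑ r ∈ R, d n (FreeGroup.lift φ r) 1) < δ →
    ∃ ψ : α → Matrix.unitaryGroup (Fin n) ℂ,
      (∀ r ∈ R, FreeGroup.lift ψ r = 1) ∧ (∑ s : α, d n (φ s) (ψ s)) < ε

/-- a finitely presented group `Γ = ⟨S | R⟩` which is both `𝒢`-approximated
and `𝒢`-stable, for a family `𝒢 = (U(n), d_n)` of unitary groups with bi-invariant
metrics, is residually finite. -/
theorem residually_finite_of_approximated_and_stable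
    {α : Type*} [Fintype α] [DecidableEq α] (R : Finset (FreeGroup α))
    (d : ∀ n, Matrix.unitaryGroup (Fin n) ℂ → Matrix.unitaryGroup (Fin n) ℂ → ℝ)
    (hmetric : ∀ n (x y z : Matrix.unitaryGroup (Fin n) ℂ),
      (d n x y = 0 ↔ x = y) ∧ d n x y = d n y x ∧ d n x z ≤ d n x y + d n y z)
    (hbi : ∀ n (a x y : Matrix.unitaryGroup (Fin n) ℂ),
      d n (a * x) (a * y) = d n x y ∧ d n (x * a) (y * a) = d n x y)
    (happrox : IsApproximated d (PresentedGroup (↑R : Set (FreeGroup α))))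
    (hstable : IsStable R d) :
    ∀ g : PresentedGroup (↑R : Set (FreeGroup α)), g ≠ 1 →
      ∃ (Q : Type) (_ : Group Q) (_ : Finite Q)
        (f : PresentedGroup (↑R : Set (FreeGroup α)) →* Q), f g ≠ 1 := by
  classical
  intro g hg
  have hsymm : ∀ n (x y : Matrix.unitaryGroup (Fin n) ℂ), d n x y = d n y x :=
    fun n x y => (hmetric n x y x).2.1
  have hzero : ∀ n (x : Matrix.unitaryGroup (Fin n) ℂ), d n x x = 0 :=
    fun n x => (hmetric n x x x).1.mpr rfl
  have htri : ∀ n (x y z : Matrix.unitaryGroup (Fin n) ℂ), d n x z ≤ d n x y + d n y z :=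
    fun n x y z => (hmetric n x y z).2.2
  have hnonneg : ∀ n (x y : Matrix.unitaryGroup (Fin n) ℂ), 0 ≤ d n x y := by
    intro n x y
    have h := htri n x y x
    rw [hzero n x, hsymm n y x] at h
    linarith
  obtain ⟨nk, -, φ, hmul, hsep⟩ := happrox
  obtain ⟨w, rfl⟩ := PresentedGroup.mk_surjective (↑R : Set (FreeGroup α)) g
  set χ : ∀ k, α → Matrix.unitaryGroup (Fin (nk k)) ℂ :=
    fun k s => φ k (PresentedGroup.of s) with hχ
  -- `d 1 (φ k 1) → 0`
  have key1 : ∀ k, d (nk k) 1 (φ k 1) = d (nk k) (φ k (1 * 1)) (φ k 1 * φ k 1) := by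
    intro k
    have h := (hbi (nk k) ((φ k 1)⁻¹) (φ k 1) (φ k 1 * φ k 1)).1
    rw [inv_mul_cancel, ← mul_assoc, inv_mul_cancel, one_mul] at h
    rw [one_mul]
    exact h
  have h1 : Tendsto (fun k => d (nk k) 1 (φ k 1)) atTop (nhds 0) := by
    simp only [key1]
    exact hmul 1 1
  -- `d (φ k gg)⁻¹ (φ k gg⁻¹) → 0`
  have hinvt : ∀ gg : PresentedGroup (↑R : Set (FreeGroup α)),
      Tendsto (fun k => d (nk k) (φ k gg)⁻¹ (φ k gg⁻¹)) atTop (nhds 0) := by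
    intro gg
    have heq : ∀ k, d (nk k) (φ k gg)⁻¹ (φ k gg⁻¹) = d (nk k) 1 (φ k gg * φ k gg⁻¹) := by
      intro k
      have h := (hbi (nk k) (φ k gg) (φ k gg)⁻¹ (φ k gg⁻¹)).1
      rw [mul_inv_cancel] at h
      exact h.symm
    have hb : ∀ k, d (nk k) 1 (φ k gg * φ k gg⁻¹) ≤
        d (nk k) 1 (φ k 1) + d (nk k) (φ k (gg * gg⁻¹)) (φ k gg * φ k gg⁻¹) := by
      intro k
      have h := htri (nk k) 1 (φ k 1) (φ k gg * φ k gg⁻¹)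
      rw [mul_inv_cancel]
      exact h
    refine squeeze_zero (fun k => hnonneg _ _ _)
      (fun k => le_trans (le_of_eq (heq k)) (hb k)) ?_
    simpa using h1.add (hmul gg gg⁻¹)
  -- `d (lift (χ k) w') (φ k (mk w')) → 0`
  have hφ : ∀ w' : FreeGroup α,
      Tendsto (fun k => d (nk k) (FreeGroup.lift (χ k) w')
        (φ k (PresentedGroup.mk (↑R : Set (FreeGroup α)) w'))) atTop (nhds 0) := by
    intro w'
    induction w' using FreeGroup.induction_on with
    | C1 =>
      simp only [map_one]
      exact h1.congr (fun k => (hsymm (nk k) 1 (φ k 1)).symm ▸ rfl)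
    | of x =>
      have hp : (pure x : FreeGroup α) = FreeGroup.of x := rfl
      simp only [FreeGroup.lift_apply_of]
      exact squeeze_zero (fun k => hnonneg _ _ _)
        (fun k => le_of_eq (hzero (nk k) (φ k (PresentedGroup.of x)))) tendsto_const_nhds
    | inv_of x _ =>
      have hp : (pure x : FreeGroup α) = FreeGroup.of x := rfl
      simp only [map_inv, FreeGroup.lift_apply_of]
      exact hinvt (PresentedGroup.of x)
    | mul x y ihx ihy =>
      refine squeeze_zero (fun k => hnonneg _ _ _)
        (g := fun k =>
          (d (nk k) (FreeGroup.lift (χ k) x) (φ k (PresentedGroup.mk (↑R : Set (FreeGroup α)) x)) +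
           d (nk k) (FreeGroup.lift (χ k) y) (φ k (PresentedGroup.mk (↑R : Set (FreeGroup α)) y))) +
          d (nk k) (φ k (PresentedGroup.mk (↑R : Set (FreeGroup α)) x *
              PresentedGroup.mk (↑R : Set (FreeGroup α)) y))
            (φ k (PresentedGroup.mk (↑R : Set (FreeGroup α)) x) *
             φ k (PresentedGroup.mk (↑R : Set (FreeGroup α)) y))) ?_ ?_
      · intro k
        set Lx := FreeGroup.lift (χ k) x
        set Ly := FreeGroup.lift (χ k) y
        set mx := PresentedGroup.mk (↑R : Set (FreeGroup α)) x
        set my := PresentedGroup.mk (↑R : Set (FreeGroup α)) y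
        simp only [map_mul]
        have t1 := htri (nk k) (Lx * Ly) (φ k mx * φ k my) (φ k (mx * my))
        have t2 := htri (nk k) (Lx * Ly) (φ k mx * Ly) (φ k mx * φ k my)
        have e1 := (hbi (nk k) Ly Lx (φ k mx)).2
        have e2 := (hbi (nk k) (φ k mx) Ly (φ k my)).1
        have e3 := hsymm (nk k) (φ k mx * φ k my) (φ k (mx * my))
        linarith
      · simpa using (ihx.add ihy).add (hmul (PresentedGroup.mk (↑R : Set (FreeGroup α)) x)
          (PresentedGroup.mk (↑R : Set (FreeGroup α)) y))
  -- separation data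
  obtain ⟨ε, hε, hfreq⟩ := hsep _ hg
  obtain ⟨C, hC⟩ := lift_dist_bound d hmetric hbi w
  set ε' : ℝ := ε / (4 * (C + 1)) with hε'def
  have hε'pos : 0 < ε' := by
    rw [hε'def]; positivity
  obtain ⟨δ, hδpos, hstab⟩ := hstable ε' hε'pos
  -- relation defects tend to zero
  have hrelterm : ∀ r ∈ R,
      Tendsto (fun k => d (nk k) (FreeGroup.lift (χ k) r) 1) atTop (nhds 0) := by
    intro r hr
    have hr1 : PresentedGroup.mk (↑R : Set (FreeGroup α)) r = 1 :=
      (QuotientGroup.eq_one_iff r).mpr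
        (Subgroup.subset_normalClosure (Finset.mem_coe.mpr hr))
    refine squeeze_zero (fun k => hnonneg _ _ _)
      (g := fun k => d (nk k) (FreeGroup.lift (χ k) r)
          (φ k (PresentedGroup.mk (↑R : Set (FreeGroup α)) r)) + d (nk k) 1 (φ k 1)) ?_ ?_
    · intro k
      have t := htri (nk k) (FreeGroup.lift (χ k) r)
        (φ k (PresentedGroup.mk (↑R : Set (FreeGroup α)) r)) 1
      have e : d (nk k) (φ k (PresentedGroup.mk (↑R : Set (FreeGroup α)) r)) 1
          = d (nk k) 1 (φ k 1) := by
        rw [hr1]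
        exact hsymm (nk k) (φ k 1) 1
      linarith
    · simpa using (hφ r).add h1
  have hrelsum : Tendsto (fun k => ∑ r ∈ R, d (nk k) (FreeGroup.lift (χ k) r) 1)
      atTop (nhds 0) := by
    have := tendsto_finset_sum R hrelterm
    simpa using this
  have hev1 : ∀ᶠ k in atTop, (∑ r ∈ R, d (nk k) (FreeGroup.lift (χ k) r) 1) < δ :=
    hrelsum.eventually (gt_mem_nhds hδpos)
  have hev2 : ∀ᶠ k in atTop, d (nk k) (FreeGroup.lift (χ k) w)
      (φ k (PresentedGroup.mk (↑R : Set (FreeGroup α)) w)) < ε / 4 :=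
    (hφ w).eventually (gt_mem_nhds (by positivity))
  obtain ⟨k, ⟨hk1, hk2⟩, hk3⟩ := ((hev1.and hev2).and_frequently hfreq).exists
  obtain ⟨ψ, hψrel, hψclose⟩ := hstab (nk k) (χ k) hk1
  have hMbound : ∀ s, d (nk k) (χ k s) (ψ s) ≤ ε' := by
    intro s
    refine le_trans ?_ (le_of_lt hψclose)
    exact Finset.single_le_sum (f := fun s => d (nk k) (χ k s) (ψ s))
      (fun i _ => hnonneg _ _ _) (Finset.mem_univ s)
  have hclose := hC (nk k) (χ k) ψ ε' (le_of_lt hε'pos) hMbound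
  have hCε : (C : ℝ) * ε' ≤ ε / 4 := by
    have h4 : (0:ℝ) < 4 * ((C : ℝ) + 1) := by positivity
    have hle : (C : ℝ) / (4 * ((C : ℝ) + 1)) ≤ 1 / 4 := by
      rw [div_le_div_iff₀ h4 (by norm_num : (0:ℝ) < 4)]
      linarith
    calc (C : ℝ) * ε' = ε * ((C : ℝ) / (4 * ((C : ℝ) + 1))) := by
          rw [hε'def]; ring
      _ ≤ ε * (1 / 4) := mul_le_mul_of_nonneg_left hle (le_of_lt hε)
      _ = ε / 4 := by ring
  -- conclude `lift ψ w ≠ 1`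
  have hd1 : d (nk k) (φ k (PresentedGroup.mk (↑R : Set (FreeGroup α)) w)) 1 ≤
      d (nk k) (φ k (PresentedGroup.mk (↑R : Set (FreeGroup α)) w)) (FreeGroup.lift (χ k) w) +
      d (nk k) (FreeGroup.lift (χ k) w) (FreeGroup.lift ψ w) +
      d (nk k) (FreeGroup.lift ψ w) 1 := by
    have t1 := htri (nk k) (φ k (PresentedGroup.mk (↑R : Set (FreeGroup α)) w))
      (FreeGroup.lift (χ k) w) 1
    have t2 := htri (nk k) (FreeGroup.lift (χ k) w) (FreeGroup.lift ψ w) 1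
    linarith
  have hsw : d (nk k) (φ k (PresentedGroup.mk (↑R : Set (FreeGroup α)) w))
      (FreeGroup.lift (χ k) w) < ε / 4 := by
    rw [hsymm]
    exact hk2
  have hpos : 0 < d (nk k) (FreeGroup.lift ψ w) 1 := by
    linarith
  have hne : FreeGroup.lift ψ w ≠ 1 := by
    intro h
    rw [h, hzero (nk k) 1] at hpos
    exact lt_irrefl _ hpos
  exact malcev_step R (nk k) ψ hψrel w hne
end

section
/- In the setting of the previous decomposition: if D_{σ_i} is a fundamental domain for the action of Γ_{σ_i} = G_{σ_i} ∩ Γ on G_{σ_i} (by right multiplication), then D = ⋃_{i=1}^m g_i⁻¹ D_{σ_i} is a fundamental domain for the right action of Γ on G. -/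
/-!
The sets `g_i⁻¹ G_{σ_i} Γ` partition `G`, since `g` lies in the `i`-th one exactly when `g⁻¹σ` lies
in the `Γ`-orbit of `σ_i`; each of them is invariant under right multiplication by `Γ`. A fundamental
domain for `G_{σ_i} ∩ Γ` acting on `G_{σ_i}` is one for `Γ` acting on `G_{σ_i} Γ`, left translation
by `g_i⁻¹` commutes with the right action, and fundamental domains of the pieces of a `Γ`-invariant
partition glue to one of the whole.
-/

open Function Set Pointwise

section

variable {G : Type*} [Group G]

def IsRightFundamentalDomain (K S D : Set G) : Prop :=
  ∀ s ∈ S, ∃! d, d ∈ D ∧ ∃ k ∈ K, s = d * k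

namespace IsRightFundamentalDomain

theorem mul_subgroup {H Γ : Subgroup G} {D : Set G} (hDH : D ⊆ H)
    (hD : IsRightFundamentalDomain ((H : Set G) ∩ Γ) H D) :
    IsRightFundamentalDomain Γ ((H : Set G) * (Γ : Set G)) D := by
  rintro _ ⟨s, hsH, γ, hγ, rfl⟩
  obtain ⟨d, ⟨hdD, k, ⟨-, hkΓ⟩, rfl⟩, hd_unique⟩ := hD s hsH
  refine ⟨d, ⟨hdD, k * γ, mul_mem hkΓ hγ, mul_assoc _ _ _⟩, ?_⟩
  rintro d' ⟨hd'D, γ', hγ', hd'⟩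
  have hs : d * k = d' * (γ' * γ⁻¹) := by rw [← mul_assoc, ← hd', mul_inv_cancel_right]
  refine hd_unique d' ⟨hd'D, γ' * γ⁻¹, ⟨?_, mul_mem hγ' (inv_mem hγ)⟩, hs⟩
  rw [SetLike.mem_coe, ← inv_mul_cancel_left d' (γ' * γ⁻¹), ← hs]
  exact mul_mem (inv_mem (hDH hd'D)) hsH

theorem smul {K S D : Set G} (hD : IsRightFundamentalDomain K S D) (a : G) :
    IsRightFundamentalDomain K (a • S) (a • D) := by
  rintro _ ⟨s, hs, rfl⟩
  obtain ⟨d, ⟨hdD, k, hk, rfl⟩, hd_unique⟩ := hD s hs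
  refine ⟨a * d, ⟨smul_mem_smul_set hdD, k, hk, (mul_assoc _ _ _).symm⟩, ?_⟩
  rintro _ ⟨⟨d', hd'D, rfl⟩, k', hk', hd'⟩
  rw [hd_unique d' ⟨hd'D, k', hk', ?_⟩]
  · rfl
  · simpa [smul_eq_mul, mul_assoc] using hd'

theorem iUnion {ι : Type*} {K : Set G} {S D : ι → Set G}
    (hS : Pairwise (Disjoint on S)) (hSK : ∀ i, ∀ s ∈ S i, ∀ k ∈ K, s * k ∈ S i)
    (hDS : ∀ i, D i ⊆ S i) (hD : ∀ i, IsRightFundamentalDomain K (S i) (D i)) :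
    IsRightFundamentalDomain K (⋃ i, S i) (⋃ i, D i) := by
  rintro s ⟨_, ⟨i, rfl⟩, hs⟩
  obtain ⟨d, ⟨hdD, hdk⟩, hd_unique⟩ := hD i s hs
  refine ⟨d, ⟨mem_iUnion_of_mem i hdD, hdk⟩, ?_⟩
  rintro d' ⟨hd'D, k', hk', rfl⟩
  obtain ⟨j, hd'D⟩ := mem_iUnion.1 hd'D
  obtain rfl : j = i := hS.eq <| not_disjoint_iff.2 ⟨_, hSK j d' (hDS j hd'D) k' hk', hs⟩
  exact hd_unique d' ⟨hd'D, k', hk', rfl⟩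

end IsRightFundamentalDomain

theorem mul_mem_smul_mul_subgroup {T : Set G} {Γ : Subgroup G} {a s k : G}
    (hs : s ∈ a • (T * (Γ : Set G))) (hk : k ∈ Γ) : s * k ∈ a • (T * (Γ : Set G)) := by
  obtain ⟨_, ⟨t, ht, γ, hγ, rfl⟩, rfl⟩ := hs
  exact ⟨t * (γ * k), ⟨t, ht, γ * k, mul_mem hγ hk, rfl⟩, by simp only [smul_eq_mul, mul_assoc]⟩

theorem mem_stabilizer_mul_subgroup_iff {X : Type*} [MulAction G X] (Γ : Subgroup G) (y : X)
    (b : G) : b ∈ (MulAction.stabilizer G y : Set G) * (Γ : Set G) ↔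
      ∃ γ : Γ, (γ : G) • y = b⁻¹ • y := by
  constructor
  · rintro ⟨s, hs, γ, hγ, rfl⟩
    refine ⟨⟨γ⁻¹, inv_mem hγ⟩, ?_⟩
    rw [mul_inv_rev, mul_smul, inv_smul_eq_iff.2 (MulAction.mem_stabilizer_iff.1 hs).symm]
  · rintro ⟨γ, hγ⟩
    refine ⟨b * γ, ?_, (γ : G)⁻¹, inv_mem γ.2, mul_inv_cancel_right b γ⟩
    rw [SetLike.mem_coe, MulAction.mem_stabilizer_iff, mul_smul, hγ, smul_inv_smul]

theorem mem_inv_smul_stabilizer_mul_subgroup_iff {X : Type*} [MulAction G X] (Γ : Subgroup G)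
    {x y : X} {a : G} (hxy : a • x = y) (g : G) :
    g ∈ a⁻¹ • ((MulAction.stabilizer G y : Set G) * (Γ : Set G)) ↔
      ∃ γ : Γ, (γ : G) • y = g⁻¹ • x := by
  rw [mem_inv_smul_set_iff, smul_eq_mul, mem_stabilizer_mul_subgroup_iff, mul_inv_rev, mul_smul,
    ← hxy, inv_smul_smul]

end

theorem fundamental_domain_of_stabilizer_domains_general
    {G : Type*} [Group G]
    {X : Type*} [MulAction G X]
    (Γ : Subgroup G)
    (σ : X) (m : ℕ) (σi : Fin m → X) (gi : Fin m → G)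
    (hgi : ∀ i, gi i • σ = σi i)
    (hreps : ∀ x ∈ MulAction.orbit G σ, ∃! i : Fin m, ∃ h : Γ, (h : G) • σi i = x)
    (Dσ : Fin m → Set G)
    (hDσsub : ∀ i, Dσ i ⊆ (MulAction.stabilizer G (σi i) : Set G))
    -- each `Dσ i` is a fundamental domain for the right action of `Γ_{σ_i}` on `G_{σ_i}`:
    (hDσ : ∀ i, ∀ s ∈ MulAction.stabilizer G (σi i),
      ∃! d : G, d ∈ Dσ i ∧ ∃ h : G, h ∈ (MulAction.stabilizer G (σi i) : Set G) ∩ (Γ : Set G)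
        ∧ s = d * h) :
    -- then `D = ⋃ i, g_i⁻¹ Dσ i` is a fundamental domain for the right action of Γ on G:
    ∀ g : G, ∃! d : G, d ∈ (⋃ i : Fin m, (fun x => (gi i)⁻¹ * x) '' Dσ i) ∧
      ∃ h ∈ Γ, g = d * h := by
  set S : Fin m → Set G := fun i => (gi i)⁻¹ • ((MulAction.stabilizer G (σi i) : Set G) * Γ)
  have hS (i : Fin m) (g : G) : g ∈ S i ↔ ∃ γ : Γ, (γ : G) • σi i = g⁻¹ • σ :=
    mem_inv_smul_stabilizer_mul_subgroup_iff Γ (hgi i) g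
  have hcover : ⋃ i, S i = univ := eq_univ_of_forall fun g =>
    mem_iUnion.2 <| (hreps _ (MulAction.mem_orbit σ g⁻¹)).exists.imp fun i => (hS i g).2
  have hdisjoint : Pairwise (Disjoint on S) := fun i j hij => disjoint_left.2 fun g hi hj =>
    hij <| (hreps _ (MulAction.mem_orbit σ g⁻¹)).unique ((hS i g).1 hi) ((hS j g).1 hj)
  have hDS (i : Fin m) : (gi i)⁻¹ • Dσ i ⊆ S i :=
    smul_set_mono <| (hDσsub i).trans (subset_mul_left _ Γ.one_mem)
  have hD := IsRightFundamentalDomain.iUnion hdisjoint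
    (fun _ _ hs _ hk => mul_mem_smul_mul_subgroup hs hk) hDS fun i =>
    ((IsRightFundamentalDomain.mul_subgroup (hDσsub i) (hDσ i)).smul (gi i)⁻¹)
  exact fun g => hD g (hcover ▸ mem_univ g)

/-- In the setting of the coset decomposition `G = ⊔_i g_i⁻¹ G_{σ_i} Γ`
(with `σ₁, …, σ_m` representatives of the `Γ`-orbits inside `G·σ` and `g_i • σ = σ_i`):
if `D_{σ_i}` is a fundamental domain for the right multiplication action of
`Γ_{σ_i} = G_{σ_i} ∩ Γ` on `G_{σ_i}`, then `D = ⋃_{i=1}^m g_i⁻¹ D_{σ_i}` is a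
fundamental domain for the right multiplication action of `Γ` on `G`. -/
theorem fundamental_domain_of_stabilizer_domains
    {G : Type*} [Group G] [TopologicalSpace G] [IsTopologicalGroup G] [LocallyCompactSpace G]
    {X : Type*} [MulAction G X]
    (hproper : ∀ x : X, IsCompact ((MulAction.stabilizer G x : Set G)))
    (Γ : Subgroup G) [DiscreteTopology Γ]
    (hcocompact : ∃ K : Set G, IsCompact K ∧ ∀ g : G, ∃ k ∈ K, ∃ h ∈ Γ, g = k * h)
    (σ : X) (m : ℕ) (σi : Fin m → X) (gi : Fin m → G)
    (hgi : ∀ i, gi i • σ = σi i)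
    (hreps : ∀ x ∈ MulAction.orbit G σ, ∃! i : Fin m, ∃ h : Γ, (h : G) • σi i = x)
    (Dσ : Fin m → Set G)
    (hDσsub : ∀ i, Dσ i ⊆ (MulAction.stabilizer G (σi i) : Set G))
    -- each `Dσ i` is a fundamental domain for the right action of `Γ_{σ_i}` on `G_{σ_i}`:
    (hDσ : ∀ i, ∀ s ∈ MulAction.stabilizer G (σi i),
      ∃! d : G, d ∈ Dσ i ∧ ∃ h : G, h ∈ (MulAction.stabilizer G (σi i) : Set G) ∩ (Γ : Set G)
        ∧ s = d * h) :
    -- then `D = ⋃ i, g_i⁻¹ Dσ i` is a fundamental domain for the right action of Γ on G: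
    ∀ g : G, ∃! d : G, d ∈ (⋃ i : Fin m, (fun x => (gi i)⁻¹ * x) '' Dσ i) ∧
      ∃ h ∈ Γ, g = d * h :=
  fundamental_domain_of_stabilizer_domains_general Γ σ m σi gi hgi hreps Dσ hDσsub hDσ
end
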